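/- arXiv:2511.05677 — 5 statements merged into one kernel-verified Lean document; each statement's English description precedes it below -/
import Mathlib

section
/- Let j > 4/9 and set ξ = 1 - 1/√((9/4)j) and A = ((9/4)j)^{2/3}. Then ξ ∈ (0,1) and the function u(y) = A·max(y-ξ,0)^{4/3} satisfies u(0)=0, u(1)=1, u ≡ 0 on [0,ξ], u > 0 on (ξ,1], u'(ξ)=0, and -u''(y) + j/√(u(y)) = 0 for all y ∈ (ξ,1). -/
/-!
The profile `A (y - ξ)₊^{4/3}` has a vanishing derivative at `ξ` because `4/3 > 1`, and for
`y > ξ` its second derivative is `(4/9) A (y - ξ)^{-2/3}` while `√u = √A (y - ξ)^{2/3}`; so it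
solves `-u'' + j/√u = 0` beyond `ξ` exactly when `j = (4/9) A^{3/2}`. With `B = (9/4) j` this
forces `A = B^{2/3}`, and `u(1) = 1` then forces `1 - ξ = B^{-1/2}`, which lies in `(0, 1)`
precisely because `j > 4/9`.
-/

open Real Set Filter Topology

section PosPartRpow

variable {ξ : ℝ}

lemma hasDerivAt_posPart_sub_rpow_of_lt (q : ℝ) {y : ℝ} (hy : ξ < y) :
    HasDerivAt (fun x => max (x - ξ) 0 ^ q) (q * (y - ξ) ^ (q - 1)) y := by
  have h := ((hasDerivAt_id y).sub_const ξ).rpow_const (p := q) (Or.inl (sub_pos.2 hy).ne')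
  refine (h.congr_of_eventuallyEq ?_).congr_deriv (by simp)
  filter_upwards [Ioi_mem_nhds hy] with x (hx : ξ < x)
  simp [max_eq_left (sub_pos.2 hx).le]

lemma hasDerivAt_posPart_sub_rpow_self {p : ℝ} (hp : 1 < p) :
    HasDerivAt (fun x => max (x - ξ) 0 ^ p) 0 ξ := by
  have hp0 : p ≠ 0 := by positivity
  have hleft : HasDerivWithinAt (fun x => max (x - ξ) 0 ^ p) 0 (Iic ξ) ξ :=
    (hasDerivWithinAt_const ξ _ 0).congr
      (fun x (hx : x ≤ ξ) => by simp [max_eq_right (sub_nonpos.2 hx), zero_rpow hp0])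
      (by simp [hp0])
  have hright : HasDerivWithinAt (fun x => max (x - ξ) 0 ^ p) 0 (Ici ξ) ξ := by
    have h := ((hasDerivAt_id ξ).sub_const ξ).rpow_const (p := p) (Or.inr hp.le)
    refine (h.hasDerivWithinAt.congr_deriv (by simp [zero_rpow (sub_ne_zero.2 hp.ne')])).congr
      (fun x (hx : ξ ≤ x) => by simp [max_eq_left (sub_nonneg.2 hx)]) (by simp)
  simpa [Iic_union_Ici] using hleft.union hright

lemma deriv_deriv_const_mul_posPart_sub_rpow (A p : ℝ) {y : ℝ} (hy : ξ < y) :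
    deriv (deriv fun x => A * max (x - ξ) 0 ^ p) y = A * (p * ((p - 1) * (y - ξ) ^ (p - 2))) := by
  have hderiv : deriv (fun x => A * max (x - ξ) 0 ^ p) =ᶠ[𝓝 y]
      fun x => A * (p * max (x - ξ) 0 ^ (p - 1)) := by
    filter_upwards [Ioi_mem_nhds hy] with x (hx : ξ < x)
    simp only [deriv_const_mul_field', (hasDerivAt_posPart_sub_rpow_of_lt p hx).deriv,
      max_eq_left (sub_pos.2 hx).le]
  rw [hderiv.deriv_eq,
    (((hasDerivAt_posPart_sub_rpow_of_lt (p - 1) hy).const_mul p).const_mul A).deriv]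
  ring_nf

end PosPartRpow

lemma rpow_two_thirds_mul_sqrt_rpow_two_thirds {B : ℝ} (hB : 0 ≤ B) :
    B ^ (2 / 3 : ℝ) * √(B ^ (2 / 3 : ℝ)) = B := by
  rw [sqrt_eq_rpow, ← rpow_mul hB, ← rpow_add' hB (by norm_num)]
  norm_num

lemma rpow_two_thirds_mul_one_div_sqrt_rpow_four_thirds {B : ℝ} (hB : 0 < B) :
    B ^ (2 / 3 : ℝ) * (1 / √B) ^ (4 / 3 : ℝ) = 1 := by
  rw [one_div, sqrt_eq_rpow, ← rpow_neg hB.le, ← rpow_mul hB.le, ← rpow_add hB]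
  norm_num

theorem neg_deriv_deriv_add_div_sqrt_eq_zero {A ξ y : ℝ} (hA : 0 < A) (hy : ξ < y) :
    -deriv (deriv fun x => A * max (x - ξ) 0 ^ (4 / 3 : ℝ)) y
      + 4 / 9 * A * √A / √(A * max (y - ξ) 0 ^ (4 / 3 : ℝ)) = 0 := by
  have ht : 0 < y - ξ := sub_pos.2 hy
  set s := (y - ξ) ^ (2 / 3 : ℝ) with hs
  have hs0 : 0 < s := rpow_pos_of_pos ht _
  have hsqrt : √(A * (y - ξ) ^ (4 / 3 : ℝ)) = √A * s := by
    rw [sqrt_mul hA.le, sqrt_eq_rpow ((y - ξ) ^ _), ← rpow_mul ht.le, hs]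
    norm_num
  have hinv : (y - ξ) ^ (4 / 3 - 2 : ℝ) = s⁻¹ := by
    rw [hs, ← rpow_neg ht.le]
    norm_num
  have hA' : 0 < √A := sqrt_pos.2 hA
  rw [deriv_deriv_const_mul_posPart_sub_rpow _ _ hy, max_eq_left ht.le, hsqrt, hinv]
  field_simp
  ring

theorem stmt_1 (j : ℝ) (hj : 4/9 < j) :
    let ξ : ℝ := 1 - 1 / Real.sqrt ((9/4) * j)
    let A : ℝ := ((9/4) * j) ^ ((2:ℝ)/3)
    let u : ℝ → ℝ := fun y => A * (max (y - ξ) 0) ^ ((4:ℝ)/3)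
    ξ ∈ Ioo (0:ℝ) 1 ∧ u 0 = 0 ∧ u 1 = 1 ∧
    (∀ y ∈ Icc (0:ℝ) ξ, u y = 0) ∧
    (∀ y ∈ Ioc ξ 1, 0 < u y) ∧
    deriv u ξ = 0 ∧
    (∀ y ∈ Ioo ξ 1, -(deriv (deriv u) y) + j / Real.sqrt (u y) = 0) := by
  generalize hB_def : (9 / 4 : ℝ) * j = B
  intro ξ A u
  have hB : 1 < B := by linarith
  have hsB : 1 < √B := by simpa using sqrt_lt_sqrt zero_le_one hB
  have hξ : ξ ∈ Ioo 0 1 :=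
    ⟨sub_pos.2 ((div_lt_one (by positivity)).2 hsB), sub_lt_self 1 (by positivity)⟩
  have hA : 0 < A := rpow_pos_of_pos (by linarith) _
  have hu_zero : ∀ y ≤ ξ, u y = 0 := fun y hy => by
    simp [u, max_eq_right (sub_nonpos.2 hy), zero_rpow (by norm_num : (4 / 3 : ℝ) ≠ 0)]
  have hu1 : u 1 = 1 := by
    change B ^ (2 / 3 : ℝ) * max (1 - ξ) 0 ^ (4 / 3 : ℝ) = 1
    rw [max_eq_left (sub_pos.2 hξ.2).le, sub_sub_cancel]
    exact rpow_two_thirds_mul_one_div_sqrt_rpow_four_thirds (by linarith)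
  have hj_eq : j = 4 / 9 * A * √A := by
    rw [mul_assoc, rpow_two_thirds_mul_sqrt_rpow_two_thirds (by linarith)]
    linarith
  refine ⟨hξ, hu_zero 0 hξ.1.le, hu1, fun y hy => hu_zero y hy.2, fun y hy => ?_, ?_,
    fun y hy => ?_⟩
  · have : 0 < y - ξ := sub_pos.2 hy.1
    simp only [u, max_eq_left this.le]
    positivity
  · exact (mul_zero A ▸ ((hasDerivAt_posPart_sub_rpow_self (by norm_num)).const_mul A)).deriv
  · rw [hj_eq]
    exact neg_deriv_deriv_add_div_sqrt_eq_zero hA hy.1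
end

section
/- Let q ∈ (-1/2,1), λ_q* = 2(1+2q)(2+q)/9, and 0 < λ < λ_q*. Choose ε > 0 with ε < (λ_q*/λ)^{2/3} - 1, set u_#(y) = y^{(4+2q)/3}, and define u(y) = (u_#(y) + ε·y)/(1+ε). Then u(0)=0, u(1)=1, u'(0) = ε/(1+ε) > 0, and -u''(y) + λ·y^q/√(u(y)) ≤ 0 for all y ∈ (0,1). -/
open Real Set

theorem stmt_5 (q lam ε : ℝ) (hq : q ∈ Ioo (-(1:ℝ)/2) 1)
    (hlam : 0 < lam) (hlam' : lam < 2*(1+2*q)*(2+q)/9)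
    (hε : 0 < ε) (hε' : ε < ((2*(1+2*q)*(2+q)/9) / lam) ^ ((2:ℝ)/3) - 1) :
    let u : ℝ → ℝ := fun y => (y ^ ((4+2*q)/3) + ε * y) / (1+ε)
    u 0 = 0 ∧ u 1 = 1 ∧
    derivWithin u (Ici 0) 0 = ε/(1+ε) ∧ 0 < ε/(1+ε) ∧
    (∀ y ∈ Ioo (0:ℝ) 1, -(deriv (deriv u) y) + lam * y ^ q / Real.sqrt (u y) ≤ 0) := by
  intro u
  obtain ⟨hq1, hq2⟩ := hq
  set α : ℝ := (4+2*q)/3 with hα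
  have hα1 : 1 < α := by rw [hα]; nlinarith
  have hα2 : α < 2 := by rw [hα]; nlinarith
  have hε1 : (0:ℝ) < 1 + ε := by linarith
  have hu0 : u 0 = 0 := by
    simp only [u]
    rw [Real.zero_rpow (by linarith : α ≠ 0)]
    simp
  have hu1 : u 1 = 1 := by
    simp only [u]
    rw [Real.one_rpow, mul_one, div_self hε1.ne']
  have hdw : derivWithin u (Ici 0) 0 = ε/(1+ε) := by
    have h0 : HasDerivAt u (ε/(1+ε)) 0 := by
      have h := ((Real.hasDerivAt_rpow_const (p := α) (x := 0) (Or.inr hα1.le)).add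
        ((hasDerivAt_id (0:ℝ)).const_mul ε)).div_const (1+ε)
      have hz : (0:ℝ) ^ (α - 1) = 0 := Real.zero_rpow (by linarith)
      simpa [hz, u] using h
    exact (h0.hasDerivWithinAt).derivWithin (uniqueDiffOn_Ici 0 0 Set.self_mem_Ici)
  refine ⟨hu0, hu1, hdw, div_pos hε hε1, ?_⟩
  -- derivative formula on Ioi 0
  have hd1 : ∀ x ∈ Ioi (0:ℝ), HasDerivAt u ((α * x^(α-1) + ε)/(1+ε)) x := by
    intro x hx
    have h := ((Real.hasDerivAt_rpow_const (p := α) (x := x) (Or.inl (ne_of_gt hx))).add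
      ((hasDerivAt_id x).const_mul ε)).div_const (1+ε)
    simpa [u, mul_one] using h
  have hEq : Set.EqOn (deriv u) (fun x => (α * x^(α-1) + ε)/(1+ε)) (Ioi 0) :=
    fun x hx => (hd1 x hx).deriv
  intro y hy
  obtain ⟨hy0, hy1⟩ := hy
  have hmem : Ioi (0:ℝ) ∈ nhds y := isOpen_Ioi.mem_nhds hy0
  have hdd : deriv (deriv u) y = α * (α-1) * y ^ (α-2) / (1+ε) := by
    have heq : deriv (deriv u) y = deriv (fun x => (α * x^(α-1) + ε)/(1+ε)) y :=
      Filter.EventuallyEq.deriv_eq (Filter.eventuallyEq_of_mem hmem hEq)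
    rw [heq]
    have h2 : HasDerivAt (fun x => (α * x^(α-1) + ε)/(1+ε))
        (α * (α-1) * y ^ (α-2) / (1+ε)) y := by
      have h := (((Real.hasDerivAt_rpow_const (p := α-1) (x := y)
        (Or.inl (ne_of_gt hy0))).const_mul α).add_const ε).div_const (1+ε)
      have : α - 1 - 1 = α - 2 := by ring
      simpa [this, mul_assoc] using h
    exact h2.deriv
  rw [hdd]
  -- lower bound on u y
  have hyα : (0:ℝ) < y ^ α := Real.rpow_pos_of_pos hy0 α
  have huy : y ^ α ≤ u y := by
    have h1 : y ^ α ≤ y := by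
      calc y ^ α ≤ y ^ (1:ℝ) :=
        Real.rpow_le_rpow_of_exponent_ge hy0 hy1.le hα1.le
      _ = y := Real.rpow_one y
    have : y ^ α * (1+ε) ≤ y ^ α + ε * y := by nlinarith
    rw [le_div_iff₀ hε1] at *
    simpa [u] using this
  have hsqrt : y ^ (α/2) ≤ Real.sqrt (u y) := by
    have h : Real.sqrt (y ^ α) = y ^ (α/2) := by
      rw [Real.sqrt_eq_rpow, ← Real.rpow_mul hy0.le]
      ring_nf
    rw [← h]
    exact Real.sqrt_le_sqrt huy
  have hs0 : (0:ℝ) < y ^ (α/2) := Real.rpow_pos_of_pos hy0 _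
  have hsu : (0:ℝ) < Real.sqrt (u y) := lt_of_lt_of_le hs0 hsqrt
  have hyq : (0:ℝ) < y ^ q := Real.rpow_pos_of_pos hy0 q
  have h1 : lam * y ^ q / Real.sqrt (u y) ≤ lam * y ^ q / y ^ (α/2) := by
    gcongr
  have h2 : lam * y ^ q / y ^ (α/2) = lam * y ^ (α-2) := by
    rw [mul_div_assoc, ← Real.rpow_sub hy0]
    congr 1
    rw [hα]; ring
  have hL : lam * (1+ε) ≤ α * (α-1) := by
    have hL0 : lam < 2*(1+2*q)*(2+q)/9 := hlam'
    have h1L : (1:ℝ) ≤ 2*(1+2*q)*(2+q)/9 / lam := (one_le_div hlam).2 hL0.le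
    have h2L : (2*(1+2*q)*(2+q)/9 / lam) ^ ((2:ℝ)/3) ≤ 2*(1+2*q)*(2+q)/9 / lam := by
      calc (2*(1+2*q)*(2+q)/9 / lam) ^ ((2:ℝ)/3)
          ≤ (2*(1+2*q)*(2+q)/9 / lam) ^ (1:ℝ) :=
            Real.rpow_le_rpow_of_exponent_le h1L (by norm_num)
        _ = 2*(1+2*q)*(2+q)/9 / lam := Real.rpow_one _
    have h3L : 1 + ε < 2*(1+2*q)*(2+q)/9 / lam := by linarith
    have h4L : lam * (1+ε) < 2*(1+2*q)*(2+q)/9 := by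
      rw [lt_div_iff₀ hlam] at h3L; linarith
    have : α * (α-1) = 2*(1+2*q)*(2+q)/9 := by rw [hα]; ring
    linarith
  have hyp : (0:ℝ) < y ^ (α-2) := Real.rpow_pos_of_pos hy0 _
  have h3 : lam * y ^ (α-2) ≤ α * (α-1) * y ^ (α-2) / (1+ε) := by
    rw [le_div_iff₀ hε1]
    nlinarith [mul_nonneg (sub_nonneg.2 hL) hyp.le]
  linarith [h1, h2.le, h3]
end

section
/- Let A, B > 0 and let H(σ) = ∫₀^σ ds/√(√s + 1). Define u(y) = (1/A)·H^{-1}(B·y) on [0,1] (where H^{-1} is the inverse of H). Then u(0)=0, u'(y) = (B/A)·√(√(A·u(y)) + 1) for y ∈ [0,1], u'(0) = B/A, and u''(y) = (B²/(4A^{3/2}))·(1/√(u(y))) for y ∈ (0,1]. -/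
open Real Set intervalIntegral

noncomputable def Hfun (σ : ℝ) : ℝ := ∫ s in (0:ℝ)..σ, 1 / Real.sqrt (Real.sqrt s + 1)

lemma sqrt_succ_pos (s : ℝ) : 0 < Real.sqrt (Real.sqrt s + 1) :=
  Real.sqrt_pos.mpr (by positivity)

lemma fpos (s : ℝ) : 0 < 1 / Real.sqrt (Real.sqrt s + 1) :=
  one_div_pos.mpr (sqrt_succ_pos s)

lemma fcont : Continuous (fun s : ℝ => 1 / Real.sqrt (Real.sqrt s + 1)) := by
  apply continuous_const.div
  · exact Real.continuous_sqrt.comp (Real.continuous_sqrt.add continuous_const)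
  · exact fun s => (sqrt_succ_pos s).ne'

lemma Hfun_hasDerivAt (σ : ℝ) :
    HasDerivAt Hfun (1 / Real.sqrt (Real.sqrt σ + 1)) σ :=
  integral_hasDerivAt_right (fcont.intervalIntegrable 0 σ)
    fcont.stronglyMeasurable.stronglyMeasurableAtFilter fcont.continuousAt

lemma Hfun_strictMono : StrictMono Hfun :=
  strictMono_of_deriv_pos fun σ => by
    rw [(Hfun_hasDerivAt σ).deriv]; exact fpos σ

lemma Hfun_zero : Hfun 0 = 0 := integral_same

lemma Hfun_of_nonpos {σ : ℝ} (hσ : σ ≤ 0) : Hfun σ = σ := by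
  have h1 : EqOn (fun s : ℝ => 1 / Real.sqrt (Real.sqrt s + 1)) (fun _ => (1:ℝ))
      (uIcc (0:ℝ) σ) := by
    intro s hs
    rw [Set.uIcc_of_ge hσ] at hs
    simp [Real.sqrt_eq_zero_of_nonpos hs.2]
  rw [Hfun, integral_congr h1, integral_const]
  simp

theorem stmt_7 (A B : ℝ) (hA : 0 < A) (hB : 0 < B)
    (Hinv : ℝ → ℝ)
    (hleft : ∀ σ ≥ (0:ℝ), Hinv (∫ s in (0:ℝ)..σ, 1 / Real.sqrt (Real.sqrt s + 1)) = σ)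
    (hright : ∀ τ ≥ (0:ℝ), (∫ s in (0:ℝ)..(Hinv τ), 1 / Real.sqrt (Real.sqrt s + 1)) = τ) :
    let u : ℝ → ℝ := fun y => (1/A) * Hinv (B * y)
    u 0 = 0 ∧
    (∀ y ∈ Icc (0:ℝ) 1,
      derivWithin u (Icc 0 1) y = (B/A) * Real.sqrt (Real.sqrt (A * u y) + 1)) ∧
    derivWithin u (Icc 0 1) 0 = B/A ∧
    (∀ y ∈ Ioc (0:ℝ) 1,
      derivWithin (derivWithin u (Icc 0 1)) (Icc 0 1) y
        = (B^2/(4*A ^ ((3:ℝ)/2))) * (1 / Real.sqrt (u y))) := by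
  intro u
  -- reformulate hleft / hright in terms of Hfun
  have hleft' : ∀ σ ≥ (0:ℝ), Hinv (Hfun σ) = σ := hleft
  have hright' : ∀ τ ≥ (0:ℝ), Hfun (Hinv τ) = τ := hright
  have hinv0 : Hinv 0 = 0 := by
    have := hleft' 0 le_rfl
    rwa [Hfun_zero] at this
  -- Hinv is nonnegative on the nonnegatives
  have hinv_nonneg : ∀ τ ≥ (0:ℝ), 0 ≤ Hinv τ := by
    intro τ hτ
    by_contra h
    push_neg at h
    have h2 : Hfun (Hinv τ) = Hinv τ := Hfun_of_nonpos h.le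
    rw [hright' τ hτ] at h2
    linarith
  -- Hinv is strictly positive for positive arguments
  have hinv_pos : ∀ τ > (0:ℝ), 0 < Hinv τ := by
    intro τ hτ
    rcases lt_or_eq_of_le (hinv_nonneg τ hτ.le) with h | h
    · exact h
    · exfalso
      have := hright' τ hτ.le
      rw [← h, Hfun_zero] at this
      linarith
  -- the global extension of Hinv
  set G : ℝ → ℝ := fun τ => if 0 ≤ τ then Hinv τ else τ with hG
  have hG_eq : ∀ τ ≥ (0:ℝ), G τ = Hinv τ := fun τ hτ => if_pos hτ
  have hGH : ∀ τ : ℝ, Hfun (G τ) = τ := by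
    intro τ
    by_cases h : 0 ≤ τ
    · rw [hG_eq τ h]; exact hright' τ h
    · simp only [hG, if_neg h]
      exact Hfun_of_nonpos (le_of_not_ge h)
  have hGmono : Monotone G := by
    intro a b hab
    by_cases ha : 0 ≤ a
    · have hb : 0 ≤ b := ha.trans hab
      rw [hG_eq a ha, hG_eq b hb]
      have := Hfun_strictMono.le_iff_le (a := Hinv a) (b := Hinv b)
      rw [hright' a ha, hright' b hb] at this
      exact this.mp hab
    · by_cases hb : 0 ≤ b
      · simp only [hG, if_neg ha, if_pos hb]
        exact (le_of_not_ge ha).trans (hinv_nonneg b hb)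
      · simp only [hG, if_neg ha, if_neg hb]
        exact hab
  have hGsurj : Function.Surjective G := by
    intro t
    by_cases ht : 0 ≤ t
    · refine ⟨Hfun t, ?_⟩
      have h0 : 0 ≤ Hfun t := by
        rw [← Hfun_zero]
        exact Hfun_strictMono.monotone ht
      rw [hG_eq _ h0]
      exact hleft' t ht
    · exact ⟨t, by simp [hG, ht]⟩
  have hGcont : Continuous G := hGmono.continuous_of_surjective hGsurj
  -- derivative of G at nonnegative points
  have hGderiv : ∀ τ ≥ (0:ℝ), HasDerivAt G (Real.sqrt (Real.sqrt (Hinv τ) + 1)) τ := by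
    intro τ hτ
    have h1 := HasDerivAt.of_local_left_inverse hGcont.continuousAt
      (Hfun_hasDerivAt (G τ)) (fpos (G τ)).ne'
      (Filter.Eventually.of_forall hGH)
    rw [one_div, inv_inv, hG_eq τ hτ] at h1
    exact h1
  have hu : ∀ y : ℝ, u y = (1/A) * Hinv (B * y) := fun _ => rfl
  -- the key derivative computation for u
  have key : ∀ y ∈ Icc (0:ℝ) 1,
      HasDerivWithinAt u ((B/A) * Real.sqrt (Real.sqrt (Hinv (B * y)) + 1)) (Icc 0 1) y := by
    intro y hy
    have hBy : 0 ≤ B * y := mul_nonneg hB.le hy.1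
    have hinner : HasDerivAt (fun y : ℝ => B * y) B y := by
      simpa using (hasDerivAt_id y).const_mul B
    have hv : HasDerivAt (fun y : ℝ => (1/A) * G (B * y))
        ((1/A) * (Real.sqrt (Real.sqrt (Hinv (B * y)) + 1) * B)) y :=
      (((hGderiv (B * y) hBy).comp y hinner)).const_mul (1/A)
    have hv' : HasDerivWithinAt (fun y : ℝ => (1/A) * G (B * y))
        ((1/A) * (Real.sqrt (Real.sqrt (Hinv (B * y)) + 1) * B)) (Icc 0 1) y :=
      hv.hasDerivWithinAt
    have heq : HasDerivWithinAt u
        ((1/A) * (Real.sqrt (Real.sqrt (Hinv (B * y)) + 1) * B)) (Icc 0 1) y := by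
      apply hv'.congr
      · intro z hz
        rw [hu z, hG_eq (B * z) (mul_nonneg hB.le hz.1)]
      · rw [hu y, hG_eq (B * y) hBy]
    convert heq using 1
    ring
  have hAu : ∀ y : ℝ, A * u y = Hinv (B * y) := by
    intro y
    rw [hu y]
    field_simp
  have hUD : UniqueDiffOn ℝ (Icc (0:ℝ) 1) := uniqueDiffOn_Icc one_pos
  have claim2 : ∀ y ∈ Icc (0:ℝ) 1,
      derivWithin u (Icc 0 1) y = (B/A) * Real.sqrt (Real.sqrt (A * u y) + 1) := by
    intro y hy
    rw [hAu y]
    exact (key y hy).derivWithin (hUD y hy)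
  have claim1 : u 0 = 0 := by
    rw [hu 0, mul_zero, hinv0, mul_zero]
  refine ⟨claim1, claim2, ?_, ?_⟩
  · rw [claim2 0 (by constructor <;> norm_num), claim1]
    simp
  · -- second derivative
    intro y hy
    have hy' : y ∈ Icc (0:ℝ) 1 := ⟨hy.1.le, hy.2⟩
    have hBy : 0 < B * y := mul_pos hB hy.1
    set σ : ℝ := Hinv (B * y) with hσdef
    have hσ : 0 < σ := hinv_pos _ hBy
    have hσG : G (B * y) = σ := hG_eq _ hBy.le
    -- rewrite the first derivative as a globally defined function W
    set W : ℝ → ℝ := fun z => (B/A) * Real.sqrt (Real.sqrt (G (B * z)) + 1) with hW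
    have hDW : EqOn (derivWithin u (Icc 0 1)) W (Icc (0:ℝ) 1) := by
      intro z hz
      rw [claim2 z hz, hAu z, hW]
      simp only
      rw [hG_eq (B * z) (mul_nonneg hB.le hz.1)]
    have hcongr : derivWithin (derivWithin u (Icc 0 1)) (Icc 0 1) y
        = derivWithin W (Icc 0 1) y :=
      derivWithin_congr hDW (hDW hy')
    -- now compute the derivative of W at y
    have hinner : HasDerivAt (fun z : ℝ => B * z) B y := by
      simpa using (hasDerivAt_id y).const_mul B
    have h1 : HasDerivAt (fun z : ℝ => G (B * z))
        (Real.sqrt (Real.sqrt σ + 1) * B) y :=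
      (hGderiv (B * y) hBy.le).comp y hinner
    have h2 : HasDerivAt (fun z : ℝ => Real.sqrt (G (B * z)))
        (1 / (2 * Real.sqrt σ) * (Real.sqrt (Real.sqrt σ + 1) * B)) y := by
      have hs : HasDerivAt Real.sqrt (1 / (2 * Real.sqrt σ)) (G (B * y)) := by
        rw [hσG]; exact Real.hasDerivAt_sqrt hσ.ne'
      exact hs.comp y h1
    have h3 : HasDerivAt (fun z : ℝ => Real.sqrt (G (B * z)) + 1)
        (1 / (2 * Real.sqrt σ) * (Real.sqrt (Real.sqrt σ + 1) * B)) y :=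
      h2.add_const 1
    have h4 : HasDerivAt (fun z : ℝ => Real.sqrt (Real.sqrt (G (B * z)) + 1))
        (1 / (2 * Real.sqrt (Real.sqrt σ + 1)) *
          (1 / (2 * Real.sqrt σ) * (Real.sqrt (Real.sqrt σ + 1) * B))) y := by
      have hs : HasDerivAt Real.sqrt (1 / (2 * Real.sqrt (Real.sqrt σ + 1)))
          (Real.sqrt (G (B * y)) + 1) := by
        rw [hσG]; exact Real.hasDerivAt_sqrt (by positivity)
      exact hs.comp y h3
    have h5 : HasDerivAt W
        ((B/A) * (1 / (2 * Real.sqrt (Real.sqrt σ + 1)) *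
          (1 / (2 * Real.sqrt σ) * (Real.sqrt (Real.sqrt σ + 1) * B)))) y :=
      h4.const_mul (B/A)
    rw [hcongr, h5.hasDerivWithinAt.derivWithin (hUD y hy')]
    -- algebraic identity
    have hsσ : 0 < Real.sqrt σ := Real.sqrt_pos.mpr hσ
    have hsc : 0 < Real.sqrt (Real.sqrt σ + 1) := sqrt_succ_pos σ
    have hsA : 0 < Real.sqrt A := Real.sqrt_pos.mpr hA
    have hApow : A ^ ((3:ℝ)/2) = A * Real.sqrt A := by
      rw [show (3:ℝ)/2 = 1 + 1/2 by norm_num, Real.rpow_add hA, Real.rpow_one,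
        ← Real.sqrt_eq_rpow]
    have huy : Real.sqrt (u y) = Real.sqrt σ / Real.sqrt A := by
      rw [hu y, ← hσdef, one_div, Real.sqrt_mul (by positivity) σ, Real.sqrt_inv]
      field_simp
    rw [hApow, huy]
    have hAA : Real.sqrt A * Real.sqrt A = A := Real.mul_self_sqrt hA.le
    field_simp
    ring
end

section
/- Let F(r) = r²/2 - 2√r, r_F = 2·2^{1/3}, and γ(μ) = (1/√2)·∫₀^μ dr/√(F(μ) - F(r)) for μ > r_F. Then lim_{μ→+∞} γ(μ) = π/2. -/
/-!
On `[0, μ]` we have `F μ - F r = (μ² - r²)/2 - 2(√μ - √r)` and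
`0 ≤ √μ - √r ≤ (μ² - r²)/μ^{3/2}`, so `F μ - F r` lies between `(1 - c)(μ² - r²)/2` and
`(μ² - r²)/2` with `c = 4/μ^{3/2}`. Since `∫₀^μ dr/√(μ² - r²) = arcsin 1 = π/2`, this gives
`π/2 ≤ γ(μ) ≤ π/2/√(1 - c)`, and `c → 0`.
-/

open Real Set Filter MeasureTheory intervalIntegral

lemma hasDerivAt_arcsin_div {μ x : ℝ} (hμ : 0 < μ) (hx : x ∈ Ioo (-μ) μ) :
    HasDerivAt (fun x => arcsin (x / μ)) (1 / √(μ ^ 2 - x ^ 2)) x := by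
  have h1 : x / μ ≠ -1 := by
    rw [ne_eq, div_eq_iff hμ.ne']; linarith [hx.1]
  have h2 : x / μ ≠ 1 := by
    rw [ne_eq, div_eq_iff hμ.ne']; linarith [hx.2]
  refine ((hasDerivAt_arcsin h1 h2).comp x ((hasDerivAt_id x).div_const μ)).congr_deriv ?_
  have hpos : 0 < μ ^ 2 - x ^ 2 := by nlinarith [hx.1, hx.2]
  rw [show 1 - (x / μ) ^ 2 = (μ ^ 2 - x ^ 2) / μ ^ 2 by field_simp,
    sqrt_div hpos.le, sqrt_sq hμ.le]
  field_simp

lemma intervalIntegrable_one_div_sqrt_sq_sub_sq {μ : ℝ} (hμ : 0 < μ) :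
    IntervalIntegrable (fun r => 1 / √(μ ^ 2 - r ^ 2)) volume 0 μ := by
  refine intervalIntegrable_deriv_of_nonneg (g := fun x => arcsin (x / μ)) (by fun_prop)
    (fun x hx => hasDerivAt_arcsin_div hμ ?_) (fun x _ => by positivity)
  rw [min_eq_left hμ.le, max_eq_right hμ.le] at hx
  exact ⟨by linarith [hx.1], hx.2⟩

lemma integral_one_div_sqrt_sq_sub_sq {μ : ℝ} (hμ : 0 < μ) :
    ∫ r in (0 : ℝ)..μ, 1 / √(μ ^ 2 - r ^ 2) = π / 2 := by
  rw [integral_eq_sub_of_hasDerivAt_of_le hμ.le (by fun_prop)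
    (fun x hx => hasDerivAt_arcsin_div hμ ⟨by linarith [hx.1], hx.2⟩)
    (intervalIntegrable_one_div_sqrt_sq_sub_sq hμ)]
  simp [div_self hμ.ne']

section Comparison

variable {D : ℝ → ℝ} {μ k K : ℝ}

lemma one_div_sqrt_le_of_mul_le (hk : 0 < k) {r : ℝ} (hr : r ∈ Ioo 0 μ)
    (h : k * (μ ^ 2 - r ^ 2) ≤ D r) : 1 / √(D r) ≤ 1 / √k * (1 / √(μ ^ 2 - r ^ 2)) := by
  have hpos : 0 < μ ^ 2 - r ^ 2 := by nlinarith [hr.1, hr.2]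
  rw [one_div_mul_one_div, ← sqrt_mul hk.le]
  exact one_div_le_one_div_of_le (sqrt_pos.2 (by positivity)) (sqrt_le_sqrt h)

lemma intervalIntegrable_one_div_sqrt_of_mul_le (hμ : 0 < μ) (hD : Measurable D) (hk : 0 < k)
    (h : ∀ r ∈ Ioo 0 μ, k * (μ ^ 2 - r ^ 2) ≤ D r) :
    IntervalIntegrable (fun r => 1 / √(D r)) volume 0 μ := by
  rw [intervalIntegrable_iff_integrableOn_Ioo_of_le hμ.le]
  refine (((intervalIntegrable_one_div_sqrt_sq_sub_sq hμ).const_mul (1 / √k)).1.mono_set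
    Ioo_subset_Ioc_self).mono'
    (by fun_prop : Measurable fun r => 1 / √(D r)).aestronglyMeasurable ?_
  filter_upwards [ae_restrict_mem measurableSet_Ioo] with r hr
  rw [Real.norm_of_nonneg (by positivity)]
  exact one_div_sqrt_le_of_mul_le hk hr (h r hr)

lemma integral_one_div_sqrt_le_of_mul_le (hμ : 0 < μ) (hD : Measurable D) (hk : 0 < k)
    (h : ∀ r ∈ Ioo 0 μ, k * (μ ^ 2 - r ^ 2) ≤ D r) :
    ∫ r in (0 : ℝ)..μ, 1 / √(D r) ≤ π / 2 / √k := by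
  calc ∫ r in (0 : ℝ)..μ, 1 / √(D r)
      ≤ ∫ r in (0 : ℝ)..μ, 1 / √k * (1 / √(μ ^ 2 - r ^ 2)) :=
        integral_mono_on_of_le_Ioo hμ.le (intervalIntegrable_one_div_sqrt_of_mul_le hμ hD hk h)
          ((intervalIntegrable_one_div_sqrt_sq_sub_sq hμ).const_mul _)
          fun r hr => one_div_sqrt_le_of_mul_le hk hr (h r hr)
    _ = π / 2 / √k := by
        rw [intervalIntegral.integral_const_mul, integral_one_div_sqrt_sq_sub_sq hμ,
          one_div_mul_eq_div]

lemma div_le_integral_one_div_sqrt_of_le_mul (hμ : 0 < μ) (hK : 0 < K)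
    (hint : IntervalIntegrable (fun r => 1 / √(D r)) volume 0 μ) (hD : ∀ r ∈ Ioo 0 μ, 0 < D r)
    (h : ∀ r ∈ Ioo 0 μ, D r ≤ K * (μ ^ 2 - r ^ 2)) :
    π / 2 / √K ≤ ∫ r in (0 : ℝ)..μ, 1 / √(D r) := by
  calc π / 2 / √K = ∫ r in (0 : ℝ)..μ, 1 / √K * (1 / √(μ ^ 2 - r ^ 2)) := by
        rw [intervalIntegral.integral_const_mul, integral_one_div_sqrt_sq_sub_sq hμ,
          one_div_mul_eq_div]
    _ ≤ ∫ r in (0 : ℝ)..μ, 1 / √(D r) :=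
        integral_mono_on_of_le_Ioo hμ.le
          ((intervalIntegrable_one_div_sqrt_sq_sub_sq hμ).const_mul _) hint fun r hr => by
          rw [one_div_mul_one_div, ← sqrt_mul hK.le]
          exact one_div_le_one_div_of_le (sqrt_pos.2 (hD r hr)) (sqrt_le_sqrt (h r hr))

end Comparison

lemma sqrt_sub_sqrt_mul_le {r μ : ℝ} (hr : 0 ≤ r) (hrμ : r ≤ μ) :
    (√μ - √r) * (μ * √μ) ≤ μ ^ 2 - r ^ 2 := by
  obtain ⟨s, hs, rfl⟩ : ∃ s, 0 ≤ s ∧ s ^ 2 = μ := ⟨√μ, sqrt_nonneg _, sq_sqrt (hr.trans hrμ)⟩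
  obtain ⟨t, ht, rfl⟩ : ∃ t, 0 ≤ t ∧ t ^ 2 = r := ⟨√r, sqrt_nonneg _, sq_sqrt hr⟩
  have hts : t ≤ s := by nlinarith
  rw [sqrt_sq hs, sqrt_sq ht]
  nlinarith [mul_nonneg (sub_nonneg.2 hts)
      (mul_nonneg ht (add_nonneg (sq_nonneg s) (sq_nonneg t))),
    mul_nonneg (sub_nonneg.2 hts) (mul_nonneg hs (mul_nonneg hs ht))]

section Potential

variable {r μ : ℝ}

lemma potential_sub_le (hrμ : r ≤ μ) :
    μ ^ 2 / 2 - 2 * √μ - (r ^ 2 / 2 - 2 * √r) ≤ 1 / 2 * (μ ^ 2 - r ^ 2) := by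
  linarith [sqrt_le_sqrt hrμ]

lemma mul_le_potential_sub (hμ : 0 < μ) (hr : 0 ≤ r) (hrμ : r ≤ μ) :
    (1 - 4 / (μ * √μ)) / 2 * (μ ^ 2 - r ^ 2) ≤ μ ^ 2 / 2 - 2 * √μ - (r ^ 2 / 2 - 2 * √r) := by
  have hμμ : 0 < μ * √μ := by positivity
  have key : 2 * (√μ - √r) ≤ 4 / (μ * √μ) / 2 * (μ ^ 2 - r ^ 2) := by
    rw [div_div, div_mul_eq_mul_div, le_div_iff₀ (by positivity)]
    nlinarith [sqrt_sub_sqrt_mul_le hr hrμ]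
  linarith

end Potential

lemma tendsto_pi_div_two_div_sqrt :
    Tendsto (fun μ : ℝ => π / 2 / √(1 - 4 / (μ * √μ))) atTop (nhds (π / 2)) := by
  have hc : Tendsto (fun μ : ℝ => 4 / (μ * √μ)) atTop (nhds 0) :=
    tendsto_const_nhds.div_atTop (tendsto_id.atTop_mul_atTop₀ tendsto_sqrt_atTop)
  have h := ((tendsto_const_nhds (x := (1 : ℝ))).sub hc).sqrt
  rw [sub_zero, sqrt_one] at h
  have := (tendsto_const_nhds (x := π / 2)).div h one_ne_zero
  rwa [div_one] at this

lemma timeMap_bounds {μ : ℝ} (hμ : 4 < μ * √μ) :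
    let I := ∫ r in (0 : ℝ)..μ, 1 / √(μ ^ 2 / 2 - 2 * √μ - (r ^ 2 / 2 - 2 * √r))
    π / 2 ≤ 1 / √2 * I ∧ 1 / √2 * I ≤ π / 2 / √(1 - 4 / (μ * √μ)) := by
  intro I
  have hμ0 : 0 < μ := by
    by_contra! h
    rw [sqrt_eq_zero'.2 h, mul_zero] at hμ
    norm_num at hμ
  have hc : 0 < (1 - 4 / (μ * √μ)) / 2 := by
    rw [div_pos_iff_of_pos_right two_pos, sub_pos, div_lt_one (by positivity)]
    exact hμ
  have hmeas : Measurable fun r : ℝ => μ ^ 2 / 2 - 2 * √μ - (r ^ 2 / 2 - 2 * √r) := by fun_prop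
  have hlow : ∀ r ∈ Ioo 0 μ, (1 - 4 / (μ * √μ)) / 2 * (μ ^ 2 - r ^ 2)
      ≤ μ ^ 2 / 2 - 2 * √μ - (r ^ 2 / 2 - 2 * √r) := fun r hr =>
    mul_le_potential_sub hμ0 hr.1.le hr.2.le
  have hpos : ∀ r ∈ Ioo 0 μ, 0 < μ ^ 2 / 2 - 2 * √μ - (r ^ 2 / 2 - 2 * √r) := fun r hr =>
    (mul_pos hc (by nlinarith [hr.1, hr.2])).trans_le (hlow r hr)
  have hupper := integral_one_div_sqrt_le_of_mul_le hμ0 hmeas hc hlow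
  have hlower := div_le_integral_one_div_sqrt_of_le_mul hμ0 one_half_pos
    (intervalIntegrable_one_div_sqrt_of_mul_le hμ0 hmeas hc hlow) hpos
    fun r hr => potential_sub_le hr.2.le
  have hs2 : 0 < √2 := by positivity
  constructor
  · calc π / 2 = 1 / √2 * (π / 2 / √(1 / 2)) := by
          rw [sqrt_div' _ zero_le_two, sqrt_one]; field_simp
      _ ≤ 1 / √2 * I := by gcongr
  · calc 1 / √2 * I ≤ 1 / √2 * (π / 2 / √((1 - 4 / (μ * √μ)) / 2)) := by gcongr
      _ = π / 2 / √(1 - 4 / (μ * √μ)) := by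
          rw [sqrt_div' _ zero_le_two]; field_simp

theorem stmt_10 :
    let F : ℝ → ℝ := fun r => r^2/2 - 2*Real.sqrt r
    let γ : ℝ → ℝ := fun μ => (1/Real.sqrt 2) * ∫ r in (0:ℝ)..μ, 1/Real.sqrt (F μ - F r)
    Tendsto γ atTop (nhds (π/2)) := by
  intro F γ
  have hlarge : ∀ᶠ μ : ℝ in atTop, 4 < μ * √μ :=
    (tendsto_id.atTop_mul_atTop₀ tendsto_sqrt_atTop).eventually_gt_atTop 4
  refine tendsto_of_tendsto_of_tendsto_of_le_of_le' tendsto_const_nhds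
    tendsto_pi_div_two_div_sqrt ?_ ?_
  · filter_upwards [hlarge] with μ hμ using (timeMap_bounds hμ).1
  · filter_upwards [hlarge] with μ hμ using (timeMap_bounds hμ).2
end

section
/- Let v₁^L, v₂^R ∈ [1-δ, 1], v₁'(L), v₂'(R) ∈ [-δ, δ], and ε > 0. Set k₁ = (v₂^R - v₁^L)/ε, B = (v₁^L + v₂^R)/2 - |k₁|·ε/2, and C = V_ε/√B - λ*·B, where 0 < V_ε < λ*. Then for δ > 0 sufficiently small one has B ≥ 1 - 3δ/2 > 0 and C < 0, and there exists k₂ with max{0, (v₁'(L)-k₁)/ε, (k₁-v₂'(R))/ε} ≤ k₂ ≤ -C/2, so that the quadratic w(θ) = k₀ + k₁(θ-R₀) - k₂(θ-R₀)² with k₀ = (v₁^L+v₂^R)/2 + k₂ε²/4 satisfies the four matching conditions w(R₀-ε/2)=v₁^L, w(R₀+ε/2)=v₂^R, w'(R₀-ε/2) ≥ v₁'(L), w'(R₀+ε/2) ≤ v₂'(R), and the subsolution inequality 2k₂ + V_ε/√B - λ*·B ≤ 0. -/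
/-!
The matching conditions are linear in `k₀, k₁` once `k₂` is fixed, and force the stated
`k₀, k₁`; the derivative conditions then only ask `k₂` to exceed a quantity of size `O(δ)`.
Meanwhile `B = min v₁ᴸ v₂ᴿ ≥ 1 - δ`, and `x ↦ V/√x - λx` is decreasing, so
`C ≤ V/√(1-δ) - λ(1-δ) → V - λ < 0` as `δ → 0`. Hence for small `δ` the interval `[O(δ), -C/2]`
of admissible `k₂` is nonempty.
-/

open Real Set Filter Topology

theorem hasDerivAt_quadratic (k₀ k₁ k₂ R₀ θ : ℝ) :
    HasDerivAt (fun θ => k₀ + k₁ * (θ - R₀) - k₂ * (θ - R₀) ^ 2)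
      (k₁ - 2 * k₂ * (θ - R₀)) θ := by
  have h : HasDerivAt (fun θ : ℝ => θ - R₀) 1 θ := (hasDerivAt_id' θ).sub_const R₀
  refine (((h.const_mul k₁).const_add k₀).sub ((h.fun_pow 2).const_mul k₂)).congr_deriv ?_
  push_cast
  ring

theorem quadratic_interpolation {ε : ℝ} (hε : ε ≠ 0) (R₀ a b k₂ : ℝ) :
    let w : ℝ → ℝ := fun θ =>
      ((a + b) / 2 + k₂ * ε ^ 2 / 4) + (b - a) / ε * (θ - R₀) - k₂ * (θ - R₀) ^ 2
    w (R₀ - ε / 2) = a ∧ w (R₀ + ε / 2) = b ∧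
      deriv w (R₀ - ε / 2) = (b - a) / ε + k₂ * ε ∧
      deriv w (R₀ + ε / 2) = (b - a) / ε - k₂ * ε := by
  intro w
  simp only [w, (hasDerivAt_quadratic _ _ _ _ _).deriv]
  refine ⟨?_, ?_, ?_, ?_⟩ <;> field_simp <;> ring

theorem add_div_two_sub_abs_sub_div_two_eq_min (a b : ℝ) :
    (a + b) / 2 - |b - a| / 2 = min a b := by
  rcases le_total a b with h | h
  · rw [abs_of_nonneg (sub_nonneg.2 h), min_eq_left h]; ring
  · rw [abs_of_nonpos (sub_nonpos.2 h), min_eq_right h]; ring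

theorem antitoneOn_div_sqrt_sub_mul {V l : ℝ} (hV : 0 ≤ V) (hl : 0 ≤ l) :
    AntitoneOn (fun x => V / √x - l * x) (Ioi 0) := by
  intro x hx y _ hxy
  have hsqrt : √x ≤ √y := Real.sqrt_le_sqrt hxy
  have hdiv : V / √y ≤ V / √x := div_le_div_of_nonneg_left hV (Real.sqrt_pos.2 hx) hsqrt
  have hmul : l * x ≤ l * y := mul_le_mul_of_nonneg_left hxy hl
  simp only
  linarith

theorem sub_div_le_of_abs_le {x y δ η ε : ℝ} (hε : 0 < ε) (hx : |x| ≤ δ) (hy : |y| ≤ η) :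
    (x - y) / ε ≤ (δ + η) / ε := by
  gcongr
  linarith [le_abs_self x, neg_abs_le y]

theorem eventually_transition_feasible (ε V l : ℝ) (hVl : V < l) :
    ∀ᶠ δ in 𝓝 (0 : ℝ), δ < 1 ∧ V / √(1 - δ) - l * (1 - δ) < (V - l) / 2 ∧
      (δ + δ / ε) / ε < (l - V) / 4 := by
  refine (continuousAt_id.eventually_lt continuousAt_const zero_lt_one).and
    ((ContinuousAt.eventually_lt ?_ continuousAt_const ?_).and
      (ContinuousAt.eventually_lt ?_ continuousAt_const ?_))
  · fun_prop (disch := simp)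
  · simp only [sub_zero, sqrt_one, div_one, mul_one]; linarith
  · fun_prop
  · simp only [zero_div, add_zero]; linarith

theorem stmt_16 (ε Vε lamstar R₀ : ℝ) (hε : 0 < ε) (hV : 0 < Vε) (hVl : Vε < lamstar) :
    ∃ δ₀ > (0:ℝ), ∀ δ : ℝ, 0 < δ → δ < δ₀ →
      ∀ v1L v2R d1 d2 : ℝ,
        v1L ∈ Icc (1-δ) 1 → v2R ∈ Icc (1-δ) 1 →
        d1 ∈ Icc (-δ) δ → d2 ∈ Icc (-δ) δ →
        let k₁ := (v2R - v1L)/ε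
        let B := (v1L + v2R)/2 - |k₁| * ε/2
        let C := Vε / Real.sqrt B - lamstar * B
        1 - 3*δ/2 ≤ B ∧ 0 < B ∧ C < 0 ∧
        ∃ k₂ : ℝ,
          max 0 (max ((d1 - k₁)/ε) ((k₁ - d2)/ε)) ≤ k₂ ∧ k₂ ≤ -C/2 ∧
          (let k₀ := (v1L + v2R)/2 + k₂*ε^2/4
           let w : ℝ → ℝ := fun θ => k₀ + k₁*(θ - R₀) - k₂*(θ - R₀)^2
           w (R₀ - ε/2) = v1L ∧ w (R₀ + ε/2) = v2R ∧
           d1 ≤ deriv w (R₀ - ε/2) ∧ deriv w (R₀ + ε/2) ≤ d2 ∧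
           2*k₂ + Vε / Real.sqrt B - lamstar * B ≤ 0) := by
  obtain ⟨δ₀, hδ₀, hsmall⟩ :=
    Metric.eventually_nhds_iff.1 (eventually_transition_feasible ε Vε lamstar hVl)
  refine ⟨δ₀, hδ₀, fun δ hδ hδδ₀ v1L v2R d1 d2 hv1 hv2 hd1 hd2 => ?_⟩
  obtain ⟨hδ1, hC, hgap⟩ := hsmall (by rwa [Real.dist_0_eq_abs, abs_of_pos hδ])
  intro k₁ B C
  have hjump : |k₁| * ε = |v2R - v1L| := by
    rw [abs_div, abs_of_pos hε, div_mul_cancel₀ _ hε.ne']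
  have hB : 1 - δ ≤ B := by
    rw [show B = min v1L v2R by rw [← add_div_two_sub_abs_sub_div_two_eq_min, ← hjump]]
    exact le_min hv1.1 hv2.1
  have hBC : C ≤ Vε / √(1 - δ) - lamstar * (1 - δ) :=
    antitoneOn_div_sqrt_sub_mul hV.le (hV.trans hVl).le (by simpa using hδ1)
      (show (0 : ℝ) < B by linarith) hB
  have hk₁ : |k₁| ≤ δ / ε := by
    rw [le_div_iff₀ hε, hjump, ← Real.dist_eq]
    simpa using Real.dist_le_of_mem_Icc hv2 hv1
  have hd1abs : |d1| ≤ δ := abs_le.2 hd1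
  have hd2abs : |d2| ≤ δ := abs_le.2 hd2
  set k₂ := max 0 (max ((d1 - k₁)/ε) ((k₁ - d2)/ε))
  have hk₂ : k₂ ≤ -C/2 := max_le (by linarith) (max_le
    (by linarith [sub_div_le_of_abs_le hε hd1abs hk₁])
    (by linarith [(sub_div_le_of_abs_le hε hk₁ hd2abs).trans_eq (by rw [add_comm])]))
  refine ⟨by linarith, by linarith, by linarith, k₂, le_rfl, hk₂, ?_⟩
  obtain ⟨hwL, hwR, hw'L, hw'R⟩ := quadratic_interpolation hε.ne' R₀ v1L v2R k₂
  have hL := (div_le_iff₀ hε).1 ((le_max_left _ _).trans (le_max_right _ _) : (d1 - k₁)/ε ≤ k₂)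
  have hR := (div_le_iff₀ hε).1 ((le_max_right _ _).trans (le_max_right _ _) : (k₁ - d2)/ε ≤ k₂)
  exact ⟨hwL, hwR, hw'L ▸ by linarith, hw'R ▸ by linarith, by linarith⟩
end
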